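/- arXiv:2302.06385 — 9 statements merged into one kernel-verified Lean document; each statement's English description precedes it below -/
import Mathlib

section
/- With the SBP setup below, the operator D_m = (1/2) Σ_{i=1}^p ( diag(Ẋ_i) D_i + D_i diag(Ẋ_i) ) satisfies the combined summation-by-parts property diag(𝒫) D_m + D_mᵀ diag(𝒫) = Eᵀ diag(P) diag(N·Ẋ) E, where (N·Ẋ) k = Σ_{i=1}^p N_i k · Ẋ_i(σ k). Equivalently, for all vectors Φ, Ψ ∈ ℝ^{nV}: Φᵀ diag(𝒫) (D_m Ψ) = −(D_m Φ)ᵀ diag(𝒫) Ψ + (EΦ)ᵀ diag(P) diag(N·Ẋ) (EΨ). -/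
/-!
Write `Qᵢ = diag(𝒫) Dᵢ` and `Xᵢ = diag(Ẋᵢ)`. Since diagonal matrices are symmetric and commute,
`diag(𝒫)(XᵢDᵢ + DᵢXᵢ) + (XᵢDᵢ + DᵢXᵢ)ᵀ diag(𝒫) = Xᵢ(Qᵢ + Qᵢᵀ) + (Qᵢ + Qᵢᵀ)Xᵢ`, and the SBP
property replaces `Qᵢ + Qᵢᵀ` by the boundary matrix `Eᵀ diag(P) diag(Nᵢ) E`. The restriction `E`
intertwines diagonal scalings, `E diag(v) = diag(v ∘ σ) E`, so both terms equal
`Eᵀ diag(P) diag(Nᵢ · Ẋᵢ ∘ σ) E`. Summing over `i` and halving gives the matrix identity, and the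
bilinear identity is the matrix identity paired with `Φ` and `Ψ`.
-/

open Matrix

section Restriction

variable {m n R : Type*} [Fintype m] [Fintype n] [DecidableEq m] [DecidableEq n] [CommSemiring R]
  {σ : m → n} {E : Matrix m n R}

theorem diagonal_mul_transpose_of_restriction
    (hE : ∀ k j, E k j = if j = σ k then 1 else 0) (v : n → R) :
    diagonal v * Eᵀ = Eᵀ * diagonal (v ∘ σ) := by
  ext j k
  by_cases h : j = σ k <;> simp [mul_apply, diagonal_apply, hE, h, eq_comm]

theorem mul_diagonal_of_restriction
    (hE : ∀ k j, E k j = if j = σ k then 1 else 0) (v : n → R) :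
    E * diagonal v = diagonal (v ∘ σ) * E := by
  simpa using congrArg transpose (diagonal_mul_transpose_of_restriction hE v)

theorem diagonal_mul_add_mul_diagonal_of_restriction
    (hE : ∀ k j, E k j = if j = σ k then 1 else 0) (v : n → R) (c w : m → R) :
    diagonal v * (Eᵀ * diagonal c * diagonal w * E) + Eᵀ * diagonal c * diagonal w * E * diagonal v
      = (2 : R) • (Eᵀ * diagonal c * diagonal (w * v ∘ σ) * E) := by
  have hl : diagonal v * (Eᵀ * diagonal c * diagonal w * E)
      = Eᵀ * diagonal c * diagonal (w * v ∘ σ) * E := by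
    rw [← Matrix.mul_assoc, ← Matrix.mul_assoc, ← Matrix.mul_assoc,
      diagonal_mul_transpose_of_restriction hE]
    simp only [Matrix.mul_assoc Eᵀ (diagonal _) (diagonal _), diagonal_mul_diagonal]
    congr 3
    funext k
    simp only [Pi.mul_apply, Function.comp_apply]
    ring
  have hr : Eᵀ * diagonal c * diagonal w * E * diagonal v
      = Eᵀ * diagonal c * diagonal (w * v ∘ σ) * E := by
    rw [Matrix.mul_assoc _ E, mul_diagonal_of_restriction hE, ← Matrix.mul_assoc]
    simp only [Matrix.mul_assoc Eᵀ (diagonal _) (diagonal _), diagonal_mul_diagonal]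
    congr 3
    funext k
    simp only [Pi.mul_apply, Function.comp_apply]
    ring
  rw [hl, hr, two_smul]

end Restriction

variable {n R : Type*} [Fintype n] [CommRing R]

theorem mul_add_transpose_mul_of_commute {A X : Matrix n n R} (hA : Aᵀ = A) (hX : Xᵀ = X)
    (hAX : Commute A X) (D : Matrix n n R) :
    A * (X * D + D * X) + (X * D + D * X)ᵀ * A
      = X * (A * D + (A * D)ᵀ) + (A * D + (A * D)ᵀ) * X := by
  have h₁ : A * (X * D) = X * (A * D) := by rw [← mul_assoc, hAX.eq, mul_assoc]
  have h₂ : (X * D)ᵀ * A = (A * D)ᵀ * X := by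
    rw [transpose_mul, transpose_mul, hA, hX, mul_assoc, ← hAX.eq, mul_assoc]
  have h₃ : (D * X)ᵀ * A = X * (A * D)ᵀ := by
    rw [transpose_mul, transpose_mul, hA, hX, mul_assoc]
  rw [transpose_add, mul_add, add_mul, h₁, h₂, h₃, ← mul_assoc A D X, mul_add, add_mul]
  abel

theorem dotProduct_mulVec_mulVec_of_mul_add_transpose_mul_eq {A M B : Matrix n n R}
    (h : A * M + Mᵀ * A = B) (x y : n → R) :
    x ⬝ᵥ (A *ᵥ (M *ᵥ y)) = -((M *ᵥ x) ⬝ᵥ (A *ᵥ y)) + x ⬝ᵥ (B *ᵥ y) := by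
  rw [← h, add_mulVec, dotProduct_add, ← mulVec_mulVec, ← mulVec_mulVec, dotProduct_mulVec x Mᵀ,
    vecMul_transpose]
  abel

theorem dotProduct_transpose_mul_mulVec {m : Type*} [Fintype m] (E : Matrix m n R)
    (C : Matrix m n R) (x y : n → R) :
    x ⬝ᵥ ((Eᵀ * C) *ᵥ y) = (E *ᵥ x) ⬝ᵥ (C *ᵥ y) := by
  rw [← mulVec_mulVec, dotProduct_mulVec, vecMul_transpose]

theorem stmt2_general (nV nS p : ℕ)
    (σ : Fin nS → Fin nV)
    (E : Matrix (Fin nS) (Fin nV) ℝ)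
    (hE : ∀ (k : Fin nS) (j : Fin nV), E k j = if j = σ k then 1 else 0)
    (Pvol : Fin nV → ℝ) (hPvol : ∀ i, 0 < Pvol i)
    (Psurf : Fin nS → ℝ)
    (N : Fin p → Fin nS → ℝ)
    (Q : Fin p → Matrix (Fin nV) (Fin nV) ℝ)
    (hQ : ∀ i, Q i + (Q i)ᵀ = Eᵀ * Matrix.diagonal Psurf * Matrix.diagonal (N i) * E)
    (D : Fin p → Matrix (Fin nV) (Fin nV) ℝ)
    (hD : ∀ i, D i = (Matrix.diagonal Pvol)⁻¹ * Q i)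
    (Xd : Fin p → Fin nV → ℝ)
    (Dm : Matrix (Fin nV) (Fin nV) ℝ)
    (hDm : Dm = (1 / 2 : ℝ) •
      ∑ i, (Matrix.diagonal (Xd i) * D i + D i * Matrix.diagonal (Xd i))) :
    Matrix.diagonal Pvol * Dm + Dmᵀ * Matrix.diagonal Pvol
        = Eᵀ * Matrix.diagonal Psurf
            * Matrix.diagonal (fun k => ∑ i, N i k * Xd i (σ k)) * E ∧
    ∀ Φ Ψ : Fin nV → ℝ,
      Φ ⬝ᵥ (Matrix.diagonal Pvol *ᵥ (Dm *ᵥ Ψ))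
        = -((Dm *ᵥ Φ) ⬝ᵥ (Matrix.diagonal Pvol *ᵥ Ψ))
          + (E *ᵥ Φ) ⬝ᵥ (Matrix.diagonal Psurf *ᵥ
              (Matrix.diagonal (fun k => ∑ i, N i k * Xd i (σ k)) *ᵥ (E *ᵥ Ψ))) := by
  have hPD : ∀ i, diagonal Pvol * D i = Q i := fun i => by
    rw [hD, mul_nonsing_inv_cancel_left]
    simpa [det_diagonal, Finset.prod_ne_zero_iff] using fun j => (hPvol j).ne'
  have hterm : ∀ i, diagonal Pvol * (diagonal (Xd i) * D i + D i * diagonal (Xd i))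
      + (diagonal (Xd i) * D i + D i * diagonal (Xd i))ᵀ * diagonal Pvol
      = (2 : ℝ) • (Eᵀ * diagonal Psurf * diagonal (N i * Xd i ∘ σ) * E) := fun i => by
    rw [mul_add_transpose_mul_of_commute (diagonal_transpose Pvol) (diagonal_transpose (Xd i))
      (commute_diagonal Pvol (Xd i)), hPD, hQ, diagonal_mul_add_mul_diagonal_of_restriction hE]
  have hsbp : diagonal Pvol * Dm + Dmᵀ * diagonal Pvol
      = Eᵀ * diagonal Psurf * diagonal (fun k => ∑ i, N i k * Xd i (σ k)) * E := by
    have hdiag : ∑ i, diagonal (N i * Xd i ∘ σ) = diagonal (fun k => ∑ i, N i k * Xd i (σ k)) := by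
      ext k l
      by_cases h : k = l <;> simp [Matrix.sum_apply, h]
    rw [hDm, transpose_smul, transpose_sum, Matrix.mul_smul, Matrix.smul_mul, ← smul_add,
      Matrix.mul_sum, Matrix.sum_mul, ← Finset.sum_add_distrib,
      Finset.sum_congr rfl fun i _ => hterm i, ← Finset.smul_sum, smul_smul, ← Matrix.sum_mul,
      ← Matrix.mul_sum, hdiag]
    norm_num
  refine ⟨hsbp, fun Φ Ψ => ?_⟩
  rw [dotProduct_mulVec_mulVec_of_mul_add_transpose_mul_eq hsbp, Matrix.mul_assoc,
    Matrix.mul_assoc, dotProduct_transpose_mul_mulVec, ← mulVec_mulVec, ← mulVec_mulVec]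

/-- The combined summation-by-parts property (3.13)–(3.14) of the discrete
skew-symmetric operator `D_m = (1/2) Σᵢ (diag(Ẋᵢ) Dᵢ + Dᵢ diag(Ẋᵢ))` built from
SBP partial derivative operators `Dᵢ = diag(𝒫)⁻¹ Qᵢ`. -/
theorem stmt2 (nV nS p : ℕ) (hnV : 0 < nV) (hnS : 0 < nS) (hp : 0 < p)
    (σ : Fin nS → Fin nV) (hσ : Function.Injective σ)
    (E : Matrix (Fin nS) (Fin nV) ℝ)
    (hE : ∀ (k : Fin nS) (j : Fin nV), E k j = if j = σ k then 1 else 0)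
    (Pvol : Fin nV → ℝ) (hPvol : ∀ i, 0 < Pvol i)
    (Psurf : Fin nS → ℝ) (hPsurf : ∀ k, 0 < Psurf k)
    (N : Fin p → Fin nS → ℝ)
    (Q : Fin p → Matrix (Fin nV) (Fin nV) ℝ)
    (hQ : ∀ i, Q i + (Q i)ᵀ = Eᵀ * Matrix.diagonal Psurf * Matrix.diagonal (N i) * E)
    (D : Fin p → Matrix (Fin nV) (Fin nV) ℝ)
    (hD : ∀ i, D i = (Matrix.diagonal Pvol)⁻¹ * Q i)
    (Xd : Fin p → Fin nV → ℝ)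
    (Dm : Matrix (Fin nV) (Fin nV) ℝ)
    (hDm : Dm = (1 / 2 : ℝ) •
      ∑ i, (Matrix.diagonal (Xd i) * D i + D i * Matrix.diagonal (Xd i))) :
    Matrix.diagonal Pvol * Dm + Dmᵀ * Matrix.diagonal Pvol
        = Eᵀ * Matrix.diagonal Psurf
            * Matrix.diagonal (fun k => ∑ i, N i k * Xd i (σ k)) * E ∧
    ∀ Φ Ψ : Fin nV → ℝ,
      Φ ⬝ᵥ (Matrix.diagonal Pvol *ᵥ (Dm *ᵥ Ψ))
        = -((Dm *ᵥ Φ) ⬝ᵥ (Matrix.diagonal Pvol *ᵥ Ψ))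
          + (E *ᵥ Φ) ⬝ᵥ (Matrix.diagonal Psurf *ᵥ
              (Matrix.diagonal (fun k => ∑ i, N i k * Xd i (σ k)) *ᵥ (E *ᵥ Ψ))) :=
  stmt2_general nV nS p σ E hE Pvol hPvol Psurf N Q hQ D hD Xd Dm hDm
end

section
/- Let nV, nS be positive integers, σ : Fin nS → Fin nV injective with restriction matrix E (E k j = 1 if j = σ k, else 0), P : Fin nS → ℝ strictly positive surface weights, and P̂ : Fin nV → ℝ strictly positive constant reference weights. Let g : ℝ → (Fin nV → ℝ) and 𝒥 : ℝ → (Fin nV → ℝ) be differentiable with 𝒥(t) i > 0 and d/dt 𝒥(t) i = g(t) i · 𝒥(t) i for all t, i; set 𝒫(t) = 𝒥(t) ⊙ P̂ (componentwise). Let D_m : ℝ → Matrix (Fin nV) (Fin nV) ℝ and W : ℝ → (Fin nS → ℝ) satisfy, for every t, the SBP property diag(𝒫(t)) D_m(t) + D_m(t)ᵀ diag(𝒫(t)) = Eᵀ diag(P) diag(W(t)) E. Let Φ, Ψ : ℝ → (Fin nV → ℝ) be differentiable, and define Φ_t(t) := Φ'(t) − D_m(t)Φ(t) + (1/2) g(t)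 ⊙ Φ(t) and Ψ_t analogously. Then for all t: d/dt [ Φ(t)ᵀ diag(𝒫(t)) Ψ(t) ] = Φ_t(t)ᵀ diag(𝒫(t)) Ψ(t) + Φ(t)ᵀ diag(𝒫(t)) Ψ_t(t) + (EΦ(t))ᵀ diag(P) diag(W(t)) (EΨ(t)). -/
/-!
Differentiate the weighted inner product by the product rule. Since d𝒫/dt = g ⊙ 𝒫, the weight's
derivative splits evenly between the two factors as the `(1/2) g` terms of `Φt` and `Ψt`; the
`Dm` terms of the split form then add up, by the SBP property, to the surface term.
-/

open Matrix

namespace Matrix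

variable {R ι κ : Type*} [CommSemiring R] [Fintype ι]

theorem diagonal_mulVec_eq_mul [DecidableEq ι] (p v : ι → R) : diagonal p *ᵥ v = p * v :=
  funext (mulVec_diagonal p v)

theorem mulVec_dotProduct_add_dotProduct_mulVec_mulVec (D M : Matrix ι ι R) (x y : ι → R) :
    (D *ᵥ x) ⬝ᵥ (M *ᵥ y) + x ⬝ᵥ (M *ᵥ (D *ᵥ y)) = x ⬝ᵥ ((M * D + Dᵀ * M) *ᵥ y) := by
  rw [add_mulVec, dotProduct_add, add_comm, ← mulVec_mulVec, ← mulVec_mulVec,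
    dotProduct_mulVec x Dᵀ, vecMul_transpose]

theorem dotProduct_transpose_mul_mul_mulVec [Fintype κ] (E : Matrix κ ι R) (M : Matrix κ κ R)
    (x y : ι → R) : x ⬝ᵥ ((Eᵀ * M * E) *ᵥ y) = (E *ᵥ x) ⬝ᵥ (M *ᵥ (E *ᵥ y)) := by
  rw [← mulVec_mulVec, ← mulVec_mulVec, dotProduct_mulVec, vecMul_transpose]

end Matrix

section Derivatives

variable {𝕜 ι : Type*} [NontriviallyNormedField 𝕜] [Fintype ι] {x : 𝕜}

theorem HasDerivAt.dotProduct {u v : 𝕜 → ι → 𝕜} {u' v' : ι → 𝕜}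
    (hu : HasDerivAt u u' x) (hv : HasDerivAt v v' x) :
    HasDerivAt (fun s => u s ⬝ᵥ v s) (u' ⬝ᵥ v x + u x ⬝ᵥ v') x := by
  rw [hasDerivAt_pi] at hu hv
  exact (HasDerivAt.fun_sum fun i _ => (hu i).fun_mul (hv i)).congr_deriv Finset.sum_add_distrib

theorem HasDerivAt.dotProduct_diagonal_mulVec [DecidableEq ι] {u p v : 𝕜 → ι → 𝕜}
    {u' p' v' : ι → 𝕜} (hu : HasDerivAt u u' x) (hp : HasDerivAt p p' x)
    (hv : HasDerivAt v v' x) :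
    HasDerivAt (fun s => u s ⬝ᵥ (diagonal (p s) *ᵥ v s))
      (u' ⬝ᵥ (diagonal (p x) *ᵥ v x) + u x ⬝ᵥ (diagonal p' *ᵥ v x)
        + u x ⬝ᵥ (diagonal (p x) *ᵥ v')) x := by
  simp only [diagonal_mulVec_eq_mul, add_assoc, ← dotProduct_add]
  exact hu.dotProduct (hp.mul hv)

end Derivatives

theorem stmt4_general (nV nS : ℕ)
    (E : Matrix (Fin nS) (Fin nV) ℝ)
    (Psurf : Fin nS → ℝ)
    (Pref : Fin nV → ℝ)
    (g J : ℝ → Fin nV → ℝ)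
    (hJ : ∀ (t : ℝ) (i : Fin nV), HasDerivAt (fun s => J s i) (g t i * J t i) t)
    (Pvol : ℝ → Fin nV → ℝ) (hPvol : ∀ t : ℝ, Pvol t = J t * Pref)
    (Dm : ℝ → Matrix (Fin nV) (Fin nV) ℝ) (W : ℝ → Fin nS → ℝ)
    (hSBP : ∀ t : ℝ, Matrix.diagonal (Pvol t) * Dm t + (Dm t)ᵀ * Matrix.diagonal (Pvol t)
      = Eᵀ * Matrix.diagonal Psurf * Matrix.diagonal (W t) * E)
    (Φ Φ' Ψ Ψ' : ℝ → Fin nV → ℝ)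
    (hΦ : ∀ t : ℝ, HasDerivAt Φ (Φ' t) t) (hΨ : ∀ t : ℝ, HasDerivAt Ψ (Ψ' t) t)
    (Φt Ψt : ℝ → Fin nV → ℝ)
    (hΦt : ∀ t : ℝ, Φt t = Φ' t - Dm t *ᵥ Φ t + (1 / 2 : ℝ) • (g t * Φ t))
    (hΨt : ∀ t : ℝ, Ψt t = Ψ' t - Dm t *ᵥ Ψ t + (1 / 2 : ℝ) • (g t * Ψ t)) :
    ∀ t : ℝ, HasDerivAt (fun s => Φ s ⬝ᵥ (Matrix.diagonal (Pvol s) *ᵥ Ψ s))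
      (Φt t ⬝ᵥ (Matrix.diagonal (Pvol t) *ᵥ Ψ t)
        + Φ t ⬝ᵥ (Matrix.diagonal (Pvol t) *ᵥ Ψt t)
        + (E *ᵥ Φ t) ⬝ᵥ (Matrix.diagonal Psurf *ᵥ (Matrix.diagonal (W t) *ᵥ (E *ᵥ Ψ t)))) t := by
  intro t
  have hPvol_deriv : HasDerivAt Pvol (g t * Pvol t) t := by
    rw [show Pvol = fun s => J s * Pref from funext hPvol]
    exact ((hasDerivAt_pi.2 (hJ t)).mul_const Pref).congr_deriv (mul_assoc (g t) (J t) Pref)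
  have hboundary : (Dm t *ᵥ Φ t) ⬝ᵥ (diagonal (Pvol t) *ᵥ Ψ t)
      + Φ t ⬝ᵥ (diagonal (Pvol t) *ᵥ (Dm t *ᵥ Ψ t))
      = (E *ᵥ Φ t) ⬝ᵥ (diagonal Psurf *ᵥ (diagonal (W t) *ᵥ (E *ᵥ Ψ t))) := by
    rw [mulVec_dotProduct_add_dotProduct_mulVec_mulVec, hSBP, Matrix.mul_assoc Eᵀ,
      dotProduct_transpose_mul_mul_mulVec, ← mulVec_mulVec]
  refine ((hΦ t).dotProduct_diagonal_mulVec hPvol_deriv (hΨ t)).congr_deriv ?_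
  rw [← hboundary, hΦt, hΨt]
  simp only [diagonal_mulVec_eq_mul, dotProduct, Pi.mul_apply, Pi.add_apply, Pi.sub_apply,
    Pi.smul_apply, smul_eq_mul, ← Finset.sum_add_distrib]
  exact Finset.sum_congr rfl fun i _ => by ring

/-- The semi-discrete Reynolds transport theorem, equation (3.15) of the paper. -/
theorem stmt4 (nV nS : ℕ) (hnV : 0 < nV) (hnS : 0 < nS)
    (σ : Fin nS → Fin nV) (hσ : Function.Injective σ)
    (E : Matrix (Fin nS) (Fin nV) ℝ)
    (hE : ∀ (k : Fin nS) (j : Fin nV), E k j = if j = σ k then 1 else 0)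
    (Psurf : Fin nS → ℝ) (hPsurf : ∀ k, 0 < Psurf k)
    (Pref : Fin nV → ℝ) (hPref : ∀ i, 0 < Pref i)
    (g J : ℝ → Fin nV → ℝ) (hJpos : ∀ (t : ℝ) (i : Fin nV), 0 < J t i)
    (hJ : ∀ (t : ℝ) (i : Fin nV), HasDerivAt (fun s => J s i) (g t i * J t i) t)
    (Pvol : ℝ → Fin nV → ℝ) (hPvol : ∀ t : ℝ, Pvol t = J t * Pref)
    (Dm : ℝ → Matrix (Fin nV) (Fin nV) ℝ) (W : ℝ → Fin nS → ℝ)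
    (hSBP : ∀ t : ℝ, Matrix.diagonal (Pvol t) * Dm t + (Dm t)ᵀ * Matrix.diagonal (Pvol t)
      = Eᵀ * Matrix.diagonal Psurf * Matrix.diagonal (W t) * E)
    (Φ Φ' Ψ Ψ' : ℝ → Fin nV → ℝ)
    (hΦ : ∀ t : ℝ, HasDerivAt Φ (Φ' t) t) (hΨ : ∀ t : ℝ, HasDerivAt Ψ (Ψ' t) t)
    (Φt Ψt : ℝ → Fin nV → ℝ)
    (hΦt : ∀ t : ℝ, Φt t = Φ' t - Dm t *ᵥ Φ t + (1 / 2 : ℝ) • (g t * Φ t))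
    (hΨt : ∀ t : ℝ, Ψt t = Ψ' t - Dm t *ᵥ Ψ t + (1 / 2 : ℝ) • (g t * Ψ t)) :
    ∀ t : ℝ, HasDerivAt (fun s => Φ s ⬝ᵥ (Matrix.diagonal (Pvol s) *ᵥ Ψ s))
      (Φt t ⬝ᵥ (Matrix.diagonal (Pvol t) *ᵥ Ψ t)
        + Φ t ⬝ᵥ (Matrix.diagonal (Pvol t) *ᵥ Ψt t)
        + (E *ᵥ Φ t) ⬝ᵥ (Matrix.diagonal Psurf *ᵥ (Matrix.diagonal (W t) *ᵥ (E *ᵥ Ψ t)))) t :=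
  stmt4_general nV nS E Psurf Pref g J hJ Pvol hPvol Dm W hSBP Φ Φ' Ψ Ψ' hΦ hΨ Φt Ψt hΦt hΨt
end

section
/- Let nV, nS be positive integers, σ : Fin nS → Fin nV injective with restriction matrix E (E k j = 1 if j = σ k, else 0), P : Fin nS → ℝ strictly positive, P̂ : Fin nV → ℝ strictly positive, 𝒥 : Fin nV → ℝ strictly positive, and set 𝒫 = 𝒥 ⊙ P̂ (componentwise product). Let W : Fin nS → ℝ and let D_m be an nV × nV real matrix satisfying the SBP property diag(𝒫) D_m + D_mᵀ diag(𝒫) = Eᵀ diag(P) diag(W) E. Let M be any nV × nV real matrix, α ∈ ℝ, and define M̂ = diag(√𝒥) (M + D_m) diag(√𝒥)⁻¹ (componentwise square roots). Then the following two conditions are equivalent: (1) for all x ∈ ℝ^{nV}, xᵀ( diag(𝒫) M + Mᵀ diag(𝒫) + Eᵀ diag(P) diag(W) E )x ≤ α xᵀ diag(𝒫) x; (2) for all x ∈ ℝ^{nV}, xᵀ( diag(P̂) M̂ + M̂ᵀ diag(P̂) )x ≤ α xᵀ diag(P̂) x. -/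
open Matrix

/-!
Since `D_m` is SBP, the surface term `Eᵀ diag(P) diag(W) E` of (3.19) is the symmetric part
`diag(𝒫) D_m + D_mᵀ diag(𝒫)`, so (3.19) says that `A = M + D_m` is semi-bounded with respect to
`diag(𝒫)`. With `S = diag(√𝒥)` and `𝒫 = 𝒥 ⊙ P̂` we have `diag(P̂) S = S⁻¹ diag(𝒫)`, hence both
matrices of (3.20) are the congruences by `S⁻¹` of those of (3.19), and semi-boundedness is
invariant under congruence by an invertible matrix.
-/

namespace Matrix

variable {n R : Type*} [Fintype n] [CommRing R]

def SemiBounded [LE R] (K P : Matrix n n R) (α : R) : Prop :=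
  ∀ x : n → R, x ⬝ᵥ (K *ᵥ x) ≤ α * (x ⬝ᵥ (P *ᵥ x))

theorem dotProduct_transpose_mul_mul_mulVec_s7 (C B : Matrix n n R) (x : n → R) :
    x ⬝ᵥ ((Cᵀ * B * C) *ᵥ x) = (C *ᵥ x) ⬝ᵥ (B *ᵥ (C *ᵥ x)) := by
  rw [← mulVec_mulVec, ← mulVec_mulVec, dotProduct_mulVec, vecMul_transpose]

theorem semiBounded_congr_iff [LE R] [DecidableEq n] {C : Matrix n n R} (hC : IsUnit C)
    (K P : Matrix n n R) (α : R) :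
    SemiBounded (Cᵀ * K * C) (Cᵀ * P * C) α ↔ SemiBounded K P α := by
  simp only [SemiBounded, dotProduct_transpose_mul_mul_mulVec_s7]
  refine ⟨fun h y => ?_, fun h x => h (C *ᵥ x)⟩
  obtain ⟨x, rfl⟩ := mulVec_surjective_iff_isUnit.2 hC y
  exact h x

theorem mul_add_transpose_mul_add_distrib (Dv M Dm : Matrix n n R) :
    Dv * M + Mᵀ * Dv + (Dv * Dm + Dmᵀ * Dv) = Dv * (M + Dm) + (M + Dm)ᵀ * Dv := by
  rw [transpose_add, mul_add, add_mul]
  abel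

theorem mul_similar_add_transpose_mul_eq_congr {D Dv S T : Matrix n n R}
    (hD : Dᵀ = D) (hDv : Dvᵀ = Dv) (hDS : D * S = Tᵀ * Dv) (A : Matrix n n R) :
    D * (S * A * T) + (S * A * T)ᵀ * D = Tᵀ * (Dv * A + Aᵀ * Dv) * T := by
  have hSD : Sᵀ * D = Dv * T := by
    rw [← hD, ← transpose_mul, hDS, transpose_mul, transpose_transpose, hDv]
  simp only [transpose_mul, mul_add, add_mul, ← Matrix.mul_assoc, hDS]
  simp only [Matrix.mul_assoc, hSD]

theorem transpose_mul_mul_eq_of_mul_eq_one [DecidableEq n] {D Dv S T : Matrix n n R}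
    (hDS : D * S = Tᵀ * Dv) (hST : S * T = 1) : Tᵀ * Dv * T = D := by
  rw [← hDS, Matrix.mul_assoc, hST, Matrix.mul_one]

end Matrix

theorem stmt7_general (nV nS : ℕ)
    (E : Matrix (Fin nS) (Fin nV) ℝ)
    (Psurf : Fin nS → ℝ)
    (Pref : Fin nV → ℝ)
    (J : Fin nV → ℝ) (hJ : ∀ i, 0 < J i)
    (Pvol : Fin nV → ℝ) (hPvol : Pvol = J * Pref)
    (W : Fin nS → ℝ)
    (Dm : Matrix (Fin nV) (Fin nV) ℝ)
    (hSBP : Matrix.diagonal Pvol * Dm + Dmᵀ * Matrix.diagonal Pvol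
      = Eᵀ * Matrix.diagonal Psurf * Matrix.diagonal W * E)
    (M : Matrix (Fin nV) (Fin nV) ℝ) (α : ℝ)
    (Mhat : Matrix (Fin nV) (Fin nV) ℝ)
    (hMhat : Mhat = Matrix.diagonal (fun i => Real.sqrt (J i)) * (M + Dm)
      * (Matrix.diagonal (fun i => Real.sqrt (J i)))⁻¹) :
    (∀ x : Fin nV → ℝ,
      x ⬝ᵥ ((Matrix.diagonal Pvol * M + Mᵀ * Matrix.diagonal Pvol
          + Eᵀ * Matrix.diagonal Psurf * Matrix.diagonal W * E) *ᵥ x)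
        ≤ α * (x ⬝ᵥ (Matrix.diagonal Pvol *ᵥ x)))
    ↔ (∀ x : Fin nV → ℝ,
      x ⬝ᵥ ((Matrix.diagonal Pref * Mhat + Mhatᵀ * Matrix.diagonal Pref) *ᵥ x)
        ≤ α * (x ⬝ᵥ (Matrix.diagonal Pref *ᵥ x))) := by
  set S := diagonal fun i => Real.sqrt (J i)
  set T := diagonal fun i => (Real.sqrt (J i))⁻¹
  have hsqrt : ∀ i, Real.sqrt (J i) ≠ 0 := fun i => (Real.sqrt_pos.2 (hJ i)).ne'
  have hST : S * T = 1 := by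
    rw [diagonal_mul_diagonal, ← diagonal_one]
    exact congrArg diagonal (funext fun i => mul_inv_cancel₀ (hsqrt i))
  have hDS : diagonal Pref * S = Tᵀ * diagonal Pvol := by
    rw [diagonal_transpose, diagonal_mul_diagonal, diagonal_mul_diagonal, hPvol]
    refine congrArg diagonal (funext fun i => ?_)
    show Pref i * √(J i) = (√(J i))⁻¹ * (J i * Pref i)
    rw [inv_mul_eq_div, eq_div_iff (hsqrt i), mul_assoc, Real.mul_self_sqrt (hJ i).le, mul_comm]
  have hsymm : ∀ v : Fin nV → ℝ, (diagonal v)ᵀ = diagonal v := diagonal_transpose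
  change SemiBounded _ _ α ↔ SemiBounded _ _ α
  rw [← hSBP, mul_add_transpose_mul_add_distrib, hMhat, inv_eq_right_inv hST,
    mul_similar_add_transpose_mul_eq_congr (hsymm _) (hsymm _) hDS,
    ← transpose_mul_mul_eq_of_mul_eq_one hDS hST, semiBounded_congr_iff]
  exact (isUnit_iff_isUnit_det T).2 (isUnit_det_of_left_inverse hST)

/-- Proposition 3.3 of the paper: equivalence between the energy-estimate matrix
condition (3.19) for the system matrix `M` (with moving-mesh quadrature
`𝒫 = 𝒥 ⊙ P̂` and surface term `W = N·Ẋ`) and the semi-boundedness condition (3.20)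
for the transformed matrix `M̂ = diag(√𝒥)(M + D_m)diag(√𝒥)⁻¹` with respect to the
constant reference quadrature `P̂`. -/
theorem stmt7 (nV nS : ℕ) (hnV : 0 < nV) (hnS : 0 < nS)
    (σ : Fin nS → Fin nV) (hσ : Function.Injective σ)
    (E : Matrix (Fin nS) (Fin nV) ℝ)
    (hE : ∀ (k : Fin nS) (j : Fin nV), E k j = if j = σ k then 1 else 0)
    (Psurf : Fin nS → ℝ) (hPsurf : ∀ k, 0 < Psurf k)
    (Pref : Fin nV → ℝ) (hPref : ∀ i, 0 < Pref i)
    (J : Fin nV → ℝ) (hJ : ∀ i, 0 < J i)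
    (Pvol : Fin nV → ℝ) (hPvol : Pvol = J * Pref)
    (W : Fin nS → ℝ)
    (Dm : Matrix (Fin nV) (Fin nV) ℝ)
    (hSBP : Matrix.diagonal Pvol * Dm + Dmᵀ * Matrix.diagonal Pvol
      = Eᵀ * Matrix.diagonal Psurf * Matrix.diagonal W * E)
    (M : Matrix (Fin nV) (Fin nV) ℝ) (α : ℝ)
    (Mhat : Matrix (Fin nV) (Fin nV) ℝ)
    (hMhat : Mhat = Matrix.diagonal (fun i => Real.sqrt (J i)) * (M + Dm)
      * (Matrix.diagonal (fun i => Real.sqrt (J i)))⁻¹) :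
    (∀ x : Fin nV → ℝ,
      x ⬝ᵥ ((Matrix.diagonal Pvol * M + Mᵀ * Matrix.diagonal Pvol
          + Eᵀ * Matrix.diagonal Psurf * Matrix.diagonal W * E) *ᵥ x)
        ≤ α * (x ⬝ᵥ (Matrix.diagonal Pvol *ᵥ x)))
    ↔ (∀ x : Fin nV → ℝ,
      x ⬝ᵥ ((Matrix.diagonal Pref * Mhat + Mhatᵀ * Matrix.diagonal Pref) *ᵥ x)
        ≤ α * (x ⬝ᵥ (Matrix.diagonal Pref *ᵥ x))) :=
  stmt7_general nV nS E Psurf Pref J hJ Pvol hPvol W Dm hSBP M α Mhat hMhat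
end

section
/- With the SBP setup below, assume each partial derivative operator is consistent: D_i 𝟙 = 0 for i = 1,…,p, where 𝟙 is the all-ones vector in ℝ^{nV}. Then D_m 𝟙 = (1/2) Σ_{i=1}^p D_i Ẋ_i; consequently, with the discrete divergence defined as ∇·Ẋ := Σ_{i=1}^p D_i Ẋ_i, one has ( D_m − (1/2) diag(∇·Ẋ) ) 𝟙 = 0. -/
open Matrix

namespace Matrix

variable {n R : Type*} [Fintype n] [DecidableEq n] [Semiring R]

theorem diagonal_mulVec_one (x : n → R) : diagonal x *ᵥ 1 = x := by
  ext j
  simp [mulVec_diagonal]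

theorem diagonal_mul_add_mul_diagonal_mulVec_one {A : Matrix n n R} (hA : A *ᵥ 1 = 0)
    (x : n → R) :
    (diagonal x * A + A * diagonal x) *ᵥ 1 = A *ᵥ x := by
  rw [add_mulVec, ← mulVec_mulVec, ← mulVec_mulVec, hA, mulVec_zero, zero_add,
    diagonal_mulVec_one]

end Matrix

theorem stmt10_general (nV p : ℕ)
    (D : Fin p → Matrix (Fin nV) (Fin nV) ℝ)
    (Xd : Fin p → Fin nV → ℝ)
    (Dm : Matrix (Fin nV) (Fin nV) ℝ)
    (hDm : Dm = (1 / 2 : ℝ) •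
      ∑ i, (Matrix.diagonal (Xd i) * D i + D i * Matrix.diagonal (Xd i)))
    (hcons : ∀ i, D i *ᵥ (1 : Fin nV → ℝ) = 0) :
    Dm *ᵥ (1 : Fin nV → ℝ) = (1 / 2 : ℝ) • ∑ i, D i *ᵥ Xd i ∧
    (Dm - (1 / 2 : ℝ) • Matrix.diagonal (∑ i, D i *ᵥ Xd i)) *ᵥ (1 : Fin nV → ℝ) = 0 := by
  have hDm_one : Dm *ᵥ (1 : Fin nV → ℝ) = (1 / 2 : ℝ) • ∑ i, D i *ᵥ Xd i := by
    simp only [hDm, smul_mulVec, sum_mulVec,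
      diagonal_mul_add_mul_diagonal_mulVec_one (hcons _)]
  refine ⟨hDm_one, ?_⟩
  rw [sub_mulVec, hDm_one, smul_mulVec, diagonal_mulVec_one, sub_self]

/-- The key consistency computation in the proof of Proposition 4.1: if the SBP
partial derivative operators are consistent (`Dᵢ 𝟙 = 0`), then
`D_m 𝟙 = (1/2) Σᵢ Dᵢ Ẋᵢ`, and with the discrete divergence `∇·Ẋ = Σᵢ Dᵢ Ẋᵢ` one has
`(D_m − (1/2) diag(∇·Ẋ)) 𝟙 = 0`. -/
theorem stmt10 (nV nS p : ℕ) (hnV : 0 < nV) (hnS : 0 < nS) (hp : 0 < p)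
    (σ : Fin nS → Fin nV) (hσ : Function.Injective σ)
    (E : Matrix (Fin nS) (Fin nV) ℝ)
    (hE : ∀ (k : Fin nS) (j : Fin nV), E k j = if j = σ k then 1 else 0)
    (Pvol : Fin nV → ℝ) (hPvol : ∀ i, 0 < Pvol i)
    (Psurf : Fin nS → ℝ) (hPsurf : ∀ k, 0 < Psurf k)
    (N : Fin p → Fin nS → ℝ)
    (Q : Fin p → Matrix (Fin nV) (Fin nV) ℝ)
    (hQ : ∀ i, Q i + (Q i)ᵀ = Eᵀ * Matrix.diagonal Psurf * Matrix.diagonal (N i) * E)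
    (D : Fin p → Matrix (Fin nV) (Fin nV) ℝ)
    (hD : ∀ i, D i = (Matrix.diagonal Pvol)⁻¹ * Q i)
    (Xd : Fin p → Fin nV → ℝ)
    (Dm : Matrix (Fin nV) (Fin nV) ℝ)
    (hDm : Dm = (1 / 2 : ℝ) •
      ∑ i, (Matrix.diagonal (Xd i) * D i + D i * Matrix.diagonal (Xd i)))
    (hcons : ∀ i, D i *ᵥ (1 : Fin nV → ℝ) = 0) :
    Dm *ᵥ (1 : Fin nV → ℝ) = (1 / 2 : ℝ) • ∑ i, D i *ᵥ Xd i ∧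
    (Dm - (1 / 2 : ℝ) • Matrix.diagonal (∑ i, D i *ᵥ Xd i)) *ᵥ (1 : Fin nV → ℝ) = 0 :=
  stmt10_general nV p D Xd Dm hDm hcons
end

section
/- With the SBP setup below, assume D_i 𝟙 = 0 for i = 1,…,p, and define the discrete divergence ∇·Ẋ(t) := Σ_{i=1}^p D_i Ẋ_i(t) (using the same operators D_i as in D_m(t)). Let u∞ ∈ ℝ, and assume the consistency conditions: 𝒟(u∞𝟙, t)(u∞𝟙) = 0, ℬ(u∞𝟙, t)(u∞𝟙) = G(t), and F(t) = 0 for all t. Then the constant function U(t) = u∞𝟙 is a stationary solution of the semi-discrete scheme; that is, for every t, ( D_m(t) − (1/2) diag(∇·Ẋ(t)) )(u∞𝟙) + 𝒟(u∞𝟙, t)(u∞𝟙) + L(t)( ℬ(u∞𝟙, t)(u∞𝟙) − G(t) ) + F(t) = 0, where L(t) = diag(𝒫)⁻¹ δ(t)ᵀ diag(P). -/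
/-!
A constant state `c • 𝟙` is annihilated by every term of the scheme. For the mesh-velocity terms
this is the identity
`(diag Ẋᵢ Dᵢ + Dᵢ diag Ẋᵢ)(c𝟙) = c Dᵢ Ẋᵢ = diag (Dᵢ Ẋᵢ)(c𝟙)`,
which uses only `Dᵢ 𝟙 = 0`: the split form of `D_m` and the discrete divergence `∇·Ẋ` built from
the same operators cancel exactly on constants.
-/

namespace Matrix

variable {n ι R : Type*} [Fintype n] [DecidableEq n] [CommRing R]

theorem diagonal_mulVec_smul_one (d : n → R) (c : R) :
    diagonal d *ᵥ (c • 1) = c • d := by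
  ext j
  simp [mulVec_diagonal, mul_comm]

theorem splitForm_mulVec_smul_one {D : Matrix n n R} (hD : D *ᵥ 1 = 0) (x : n → R) (c : R) :
    (diagonal x * D + D * diagonal x) *ᵥ (c • 1) = c • (D *ᵥ x) := by
  rw [add_mulVec, ← mulVec_mulVec, ← mulVec_mulVec, mulVec_smul, hD, smul_zero, mulVec_zero,
    zero_add, diagonal_mulVec_smul_one, mulVec_smul]

theorem splitForm_sub_diagonal_div_mulVec_smul_one [Fintype ι] {D : ι → Matrix n n R}
    (hD : ∀ i, D i *ᵥ 1 = 0) (X : ι → n → R) (a c : R) :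
    (a • ∑ i, (diagonal (X i) * D i + D i * diagonal (X i))
        - a • diagonal (∑ i, D i *ᵥ X i)) *ᵥ (c • 1) = 0 := by
  rw [sub_mulVec, smul_mulVec, smul_mulVec, sum_mulVec, diagonal_mulVec_smul_one]
  simp only [splitForm_mulVec_smul_one (hD _), ← Finset.smul_sum]
  exact sub_self _

end Matrix

open Matrix

theorem stmt11_general (nV nS p : ℕ)
    (D : Fin p → Matrix (Fin nV) (Fin nV) ℝ)
    (Xd : Fin p → ℝ → Fin nV → ℝ)
    (Dm : ℝ → Matrix (Fin nV) (Fin nV) ℝ)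
    (hDm : ∀ t : ℝ, Dm t = (1 / 2 : ℝ) •
      ∑ i, (Matrix.diagonal (Xd i t) * D i + D i * Matrix.diagonal (Xd i t)))
    (divX : ℝ → Fin nV → ℝ)
    (hdivX : ∀ t : ℝ, divX t = ∑ i, D i *ᵥ Xd i t)
    (𝒟 : (Fin nV → ℝ) → ℝ → Matrix (Fin nV) (Fin nV) ℝ)
    (ℬ : (Fin nV → ℝ) → ℝ → Matrix (Fin nS) (Fin nV) ℝ)
    (G : ℝ → Fin nS → ℝ) (F : ℝ → Fin nV → ℝ)
    (L : ℝ → Matrix (Fin nV) (Fin nS) ℝ)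
    (uinf : ℝ)
    (hcons : ∀ i, D i *ᵥ (1 : Fin nV → ℝ) = 0)
    (h𝒟 : ∀ t : ℝ, 𝒟 (uinf • (1 : Fin nV → ℝ)) t *ᵥ (uinf • (1 : Fin nV → ℝ)) = 0)
    (hℬ : ∀ t : ℝ, ℬ (uinf • (1 : Fin nV → ℝ)) t *ᵥ (uinf • (1 : Fin nV → ℝ)) = G t)
    (hF : ∀ t : ℝ, F t = 0) :
    ∀ t : ℝ,
      (Dm t - (1 / 2 : ℝ) • Matrix.diagonal (divX t)) *ᵥ (uinf • (1 : Fin nV → ℝ))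
        + 𝒟 (uinf • (1 : Fin nV → ℝ)) t *ᵥ (uinf • (1 : Fin nV → ℝ))
        + L t *ᵥ (ℬ (uinf • (1 : Fin nV → ℝ)) t *ᵥ (uinf • (1 : Fin nV → ℝ)) - G t)
        + F t = 0 := by
  intro t
  rw [hDm, hdivX, splitForm_sub_diagonal_div_mulVec_smul_one hcons, h𝒟, hℬ, hF, sub_self,
    mulVec_zero]
  simp

/-- Proposition 4.1 of the paper: semi-discrete free-stream preservation. Under the
consistency conditions `Dᵢ 𝟙 = 0`, `𝒟(u∞𝟙,t)(u∞𝟙) = 0`, `ℬ(u∞𝟙,t)(u∞𝟙) = G(t)` and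
`F(t) = 0`, the constant state `u∞𝟙` is a stationary solution of the semi-discrete
scheme: the full right-hand side evaluated at `u∞𝟙` vanishes. -/
theorem stmt11 (nV nS p : ℕ) (hnV : 0 < nV) (hnS : 0 < nS) (hp : 0 < p)
    (σ : Fin nS → Fin nV) (hσ : Function.Injective σ)
    (E : Matrix (Fin nS) (Fin nV) ℝ)
    (hE : ∀ (k : Fin nS) (j : Fin nV), E k j = if j = σ k then 1 else 0)
    (Pvol : Fin nV → ℝ) (hPvol : ∀ i, 0 < Pvol i)
    (Psurf : Fin nS → ℝ) (hPsurf : ∀ k, 0 < Psurf k)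
    (N : Fin p → Fin nS → ℝ)
    (Q : Fin p → Matrix (Fin nV) (Fin nV) ℝ)
    (hQ : ∀ i, Q i + (Q i)ᵀ = Eᵀ * Matrix.diagonal Psurf * Matrix.diagonal (N i) * E)
    (D : Fin p → Matrix (Fin nV) (Fin nV) ℝ)
    (hD : ∀ i, D i = (Matrix.diagonal Pvol)⁻¹ * Q i)
    (Xd : Fin p → ℝ → Fin nV → ℝ)
    (Dm : ℝ → Matrix (Fin nV) (Fin nV) ℝ)
    (hDm : ∀ t : ℝ, Dm t = (1 / 2 : ℝ) •
      ∑ i, (Matrix.diagonal (Xd i t) * D i + D i * Matrix.diagonal (Xd i t)))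
    (divX : ℝ → Fin nV → ℝ)
    (hdivX : ∀ t : ℝ, divX t = ∑ i, D i *ᵥ Xd i t)
    (𝒟 : (Fin nV → ℝ) → ℝ → Matrix (Fin nV) (Fin nV) ℝ)
    (ℬ : (Fin nV → ℝ) → ℝ → Matrix (Fin nS) (Fin nV) ℝ)
    (δ : ℝ → Matrix (Fin nS) (Fin nV) ℝ)
    (G : ℝ → Fin nS → ℝ) (F : ℝ → Fin nV → ℝ)
    (L : ℝ → Matrix (Fin nV) (Fin nS) ℝ)
    (hL : ∀ t : ℝ, L t = (Matrix.diagonal Pvol)⁻¹ * (δ t)ᵀ * Matrix.diagonal Psurf)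
    (uinf : ℝ)
    (hcons : ∀ i, D i *ᵥ (1 : Fin nV → ℝ) = 0)
    (h𝒟 : ∀ t : ℝ, 𝒟 (uinf • (1 : Fin nV → ℝ)) t *ᵥ (uinf • (1 : Fin nV → ℝ)) = 0)
    (hℬ : ∀ t : ℝ, ℬ (uinf • (1 : Fin nV → ℝ)) t *ᵥ (uinf • (1 : Fin nV → ℝ)) = G t)
    (hF : ∀ t : ℝ, F t = 0) :
    ∀ t : ℝ,
      (Dm t - (1 / 2 : ℝ) • Matrix.diagonal (divX t)) *ᵥ (uinf • (1 : Fin nV → ℝ))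
        + 𝒟 (uinf • (1 : Fin nV → ℝ)) t *ᵥ (uinf • (1 : Fin nV → ℝ))
        + L t *ᵥ (ℬ (uinf • (1 : Fin nV → ℝ)) t *ᵥ (uinf • (1 : Fin nV → ℝ)) - G t)
        + F t = 0 :=
  stmt11_general nV nS p D Xd Dm hDm divX hdivX 𝒟 ℬ G F L uinf hcons h𝒟 hℬ hF
end

section
/- With the setup below, assume D_i 𝟙 = 0 for i = 1,…,p, 𝒟(u∞𝟙, t)(u∞𝟙) = 0, ℬ(u∞𝟙, t)(u∞𝟙) = G(t), and F(t) = 0, and define ∇·Ẋ(t) := Σ_{i=1}^p D_i Ẋ_i(t) and the right-hand-side function RHS(w, V, t) := diag(w) [ D_m(t) V + 𝒟(V, t) V + L(t)( ℬ(V, t) V − G(t) ) + F(t) ], where L(t) = diag(𝒫)⁻¹ δ(t)ᵀ diag(P). Then for every vector w ∈ ℝ^{nV}, every u∞ ∈ ℝ, and every t: RHS(w, u∞𝟙, t) = (u∞/2) · (∇·Ẋ(t)) ⊙ w, where ⊙ denotes the componentwise product. -/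
/-! At the free-stream state the dissipation, the boundary penalty and the source vanish by
hypothesis, so only the split-form mesh-velocity term `D_m (u∞𝟙)` survives. In each half
`diag(Ẋ_i) D_i 𝟙 + D_i diag(Ẋ_i) 𝟙` the first summand vanishes by consistency `D_i 𝟙 = 0`
and the second is `D_i Ẋ_i`, so `D_m (u∞𝟙) = (u∞/2) ∇·Ẋ`. -/

open Matrix

namespace Matrix

variable {n ι α : Type*} [Fintype n] [DecidableEq n]

theorem diagonal_mulVec_eq_mul_s12 [NonUnitalNonAssocSemiring α] (v w : n → α) :
    diagonal v *ᵥ w = v * w :=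
  funext (mulVec_diagonal v w)

variable [CommRing α]

theorem diagonal_mul_add_mul_diagonal_mulVec_smul_one {D : Matrix n n α}
    (hD : D *ᵥ 1 = 0) (x : n → α) (c : α) :
    (diagonal x * D + D * diagonal x) *ᵥ (c • 1) = c • (D *ᵥ x) := by
  rw [add_mulVec, ← mulVec_mulVec, ← mulVec_mulVec, mulVec_smul, hD, smul_zero,
    mulVec_zero, zero_add, diagonal_mulVec_eq_mul_s12, mul_smul_comm, mul_one, mulVec_smul]

theorem smul_sum_diagonal_mul_add_mul_diagonal_mulVec_smul_one (s : Finset ι)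
    {D : ι → Matrix n n α} (hD : ∀ i ∈ s, D i *ᵥ 1 = 0) (X : ι → n → α) (a c : α) :
    (a • ∑ i ∈ s, (diagonal (X i) * D i + D i * diagonal (X i))) *ᵥ (c • 1) =
      (a * c) • ∑ i ∈ s, D i *ᵥ X i := by
  rw [smul_mulVec, sum_mulVec, Finset.sum_congr rfl fun i hi =>
    diagonal_mul_add_mul_diagonal_mulVec_smul_one (hD i hi) (X i) c, ← Finset.smul_sum,
    smul_smul]

end Matrix

theorem stmt12_general (nV nS p : ℕ)
    (D : Fin p → Matrix (Fin nV) (Fin nV) ℝ)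
    (Xd : Fin p → ℝ → Fin nV → ℝ)
    (Dm : ℝ → Matrix (Fin nV) (Fin nV) ℝ)
    (hDm : ∀ t : ℝ, Dm t = (1 / 2 : ℝ) •
      ∑ i, (Matrix.diagonal (Xd i t) * D i + D i * Matrix.diagonal (Xd i t)))
    (divX : ℝ → Fin nV → ℝ)
    (hdivX : ∀ t : ℝ, divX t = ∑ i, D i *ᵥ Xd i t)
    (𝒟 : (Fin nV → ℝ) → ℝ → Matrix (Fin nV) (Fin nV) ℝ)
    (ℬ : (Fin nV → ℝ) → ℝ → Matrix (Fin nS) (Fin nV) ℝ)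
    (G : ℝ → Fin nS → ℝ) (F : ℝ → Fin nV → ℝ)
    (L : ℝ → Matrix (Fin nV) (Fin nS) ℝ)
    (RHS : (Fin nV → ℝ) → (Fin nV → ℝ) → ℝ → (Fin nV → ℝ))
    (hRHS : ∀ (w V : Fin nV → ℝ) (t : ℝ),
      RHS w V t = Matrix.diagonal w *ᵥ
        (Dm t *ᵥ V + 𝒟 V t *ᵥ V + L t *ᵥ (ℬ V t *ᵥ V - G t) + F t))
    (hcons : ∀ i, D i *ᵥ (1 : Fin nV → ℝ) = 0)
    (h𝒟 : ∀ (uinf : ℝ) (t : ℝ),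
      𝒟 (uinf • (1 : Fin nV → ℝ)) t *ᵥ (uinf • (1 : Fin nV → ℝ)) = 0)
    (hℬ : ∀ (uinf : ℝ) (t : ℝ),
      ℬ (uinf • (1 : Fin nV → ℝ)) t *ᵥ (uinf • (1 : Fin nV → ℝ)) = G t)
    (hF : ∀ t : ℝ, F t = 0) :
    ∀ (w : Fin nV → ℝ) (uinf : ℝ) (t : ℝ),
      RHS w (uinf • (1 : Fin nV → ℝ)) t = (uinf / 2) • (divX t * w) := by
  intro w uinf t
  rw [hRHS, hDm, smul_sum_diagonal_mul_add_mul_diagonal_mulVec_smul_one _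
      (fun i _ => hcons i), h𝒟, hℬ, hF, sub_self, mulVec_zero, add_zero, add_zero, add_zero, ← hdivX,
    diagonal_mulVec_eq_mul_s12, mul_smul_comm, mul_comm w, one_div_mul_eq_div]

/-- Identity (4.4) of the paper: evaluated at the free-stream state `u∞𝟙`, the
right-hand side `RHS(w, V, t) = diag(w)[D_m V + 𝒟(V,t)V + L(ℬ(V,t)V − G) + F]` of
the transformed scheme reduces to `(u∞/2)(∇·Ẋ) ⊙ w`. -/
theorem stmt12 (nV nS p : ℕ) (hnV : 0 < nV) (hnS : 0 < nS) (hp : 0 < p)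
    (σ : Fin nS → Fin nV) (hσ : Function.Injective σ)
    (E : Matrix (Fin nS) (Fin nV) ℝ)
    (hE : ∀ (k : Fin nS) (j : Fin nV), E k j = if j = σ k then 1 else 0)
    (Pvol : Fin nV → ℝ) (hPvol : ∀ i, 0 < Pvol i)
    (Psurf : Fin nS → ℝ) (hPsurf : ∀ k, 0 < Psurf k)
    (N : Fin p → Fin nS → ℝ)
    (Q : Fin p → Matrix (Fin nV) (Fin nV) ℝ)
    (hQ : ∀ i, Q i + (Q i)ᵀ = Eᵀ * Matrix.diagonal Psurf * Matrix.diagonal (N i) * E)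
    (D : Fin p → Matrix (Fin nV) (Fin nV) ℝ)
    (hD : ∀ i, D i = (Matrix.diagonal Pvol)⁻¹ * Q i)
    (Xd : Fin p → ℝ → Fin nV → ℝ)
    (Dm : ℝ → Matrix (Fin nV) (Fin nV) ℝ)
    (hDm : ∀ t : ℝ, Dm t = (1 / 2 : ℝ) •
      ∑ i, (Matrix.diagonal (Xd i t) * D i + D i * Matrix.diagonal (Xd i t)))
    (divX : ℝ → Fin nV → ℝ)
    (hdivX : ∀ t : ℝ, divX t = ∑ i, D i *ᵥ Xd i t)
    (𝒟 : (Fin nV → ℝ) → ℝ → Matrix (Fin nV) (Fin nV) ℝ)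
    (ℬ : (Fin nV → ℝ) → ℝ → Matrix (Fin nS) (Fin nV) ℝ)
    (δ : ℝ → Matrix (Fin nS) (Fin nV) ℝ)
    (G : ℝ → Fin nS → ℝ) (F : ℝ → Fin nV → ℝ)
    (L : ℝ → Matrix (Fin nV) (Fin nS) ℝ)
    (hL : ∀ t : ℝ, L t = (Matrix.diagonal Pvol)⁻¹ * (δ t)ᵀ * Matrix.diagonal Psurf)
    (RHS : (Fin nV → ℝ) → (Fin nV → ℝ) → ℝ → (Fin nV → ℝ))
    (hRHS : ∀ (w V : Fin nV → ℝ) (t : ℝ),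
      RHS w V t = Matrix.diagonal w *ᵥ
        (Dm t *ᵥ V + 𝒟 V t *ᵥ V + L t *ᵥ (ℬ V t *ᵥ V - G t) + F t))
    (hcons : ∀ i, D i *ᵥ (1 : Fin nV → ℝ) = 0)
    (h𝒟 : ∀ (uinf : ℝ) (t : ℝ),
      𝒟 (uinf • (1 : Fin nV → ℝ)) t *ᵥ (uinf • (1 : Fin nV → ℝ)) = 0)
    (hℬ : ∀ (uinf : ℝ) (t : ℝ),
      ℬ (uinf • (1 : Fin nV → ℝ)) t *ᵥ (uinf • (1 : Fin nV → ℝ)) = G t)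
    (hF : ∀ t : ℝ, F t = 0) :
    ∀ (w : Fin nV → ℝ) (uinf : ℝ) (t : ℝ),
      RHS w (uinf • (1 : Fin nV → ℝ)) t = (uinf / 2) • (divX t * w) :=
  stmt12_general nV nS p D Xd Dm hDm divX hdivX 𝒟 ℬ G F L RHS hRHS hcons h𝒟 hℬ hF
end

section
/- Consider one step of an s-stage explicit Runge–Kutta method applied to the coupled system for the Jacobian square root and the transformed solution. Let n ≥ 1 and s ≥ 1 be integers, a : Fin s → Fin s → ℝ, b, c : Fin s → ℝ the Runge–Kutta coefficients, Δt ∈ ℝ the step size, t_n ∈ ℝ the current time, r : Fin n → ℝ the current Jacobian square-root vector, u∞ ∈ ℝ, and U^n = u∞𝟙 the current solution. Let g : ℝ → (Fin n → ℝ) and let RHS : (Fin n → ℝ) → (Fin n → ℝ) → ℝ → (Fin n → ℝ) satisfy the free-stream identity RHS(w, u∞𝟙, t) = (u∞/2) · g(t) ⊙ w for every w ∈ ℝ^n and every t ∈ ℝ. Define the stage vectors recursively for k = 1,…,s by r̄^k = r + Δt Σ_{ν < k} (a_{kν}/2) g(t_n + c_ν Δt) ⊙ r̄^ν and Ū^k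 determined by r̄^k ⊙ Ū^k = r ⊙ U^n + Δt Σ_{ν < k} a_{kν} RHS(r̄^ν, Ū^ν, t_n + c_ν Δt), assuming every component of every r̄^k is nonzero. Define the update r^{new} = r + Δt Σ_{k=1}^s (b_k/2) g(t_n + c_k Δt) ⊙ r̄^k and U^{n+1} determined by r^{new} ⊙ U^{n+1} = r ⊙ U^n + Δt Σ_{k=1}^s b_k RHS(r̄^k, Ū^k, t_n + c_k Δt), assuming every component of r^{new} is nonzero. Then Ū^k = u∞𝟙 for every stage k = 1,…,s, and U^{n+1} = u∞𝟙. -/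
/-!
The Jacobian square root `r` is advanced by the same Runge–Kutta weights as the conserved
variable `r ⊙ U`. When every stage value fed into the right-hand side is the free stream
`u∞𝟙`, the free-stream identity turns that right-hand side into `u∞/2 · g ⊙ r̄`, so the update
of `r ⊙ U` is exactly `u∞` times the update of `r`; dividing by the (nonzero) new `r` gives
`U = u∞𝟙`. Since the method is explicit, each stage only sees earlier stages, and strong
induction over the stage index closes the argument.
-/

open Finset

variable {ι σ K : Type*} [Field K]

theorem eq_smul_one_of_mul_eq_smul {v w : ι → K} {u : K} (hv : ∀ i, v i ≠ 0)
    (h : v * w = u • v) : w = u • (1 : ι → K) := by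
  funext i
  have hi : v i * w i = v i * u := by simpa [mul_comm] using congrFun h i
  simpa using mul_left_cancel₀ (hv i) hi

theorem free_stream_explicit_update (RHS : (ι → K) → (ι → K) → K → (ι → K))
    (g : K → ι → K) {u : K} (hRHS : ∀ w t, RHS w (u • (1 : ι → K)) t = (u / 2) • (g t * w))
    (T : Finset σ) (β τ : σ → K) (ρ V : σ → ι → K) (hV : ∀ k ∈ T, V k = u • (1 : ι → K))
    (h : K) {r R W : ι → K}
    (hR : R = r + h • ∑ k ∈ T, (β k / 2) • (g (τ k) * ρ k))
    (hW : R * W = r * (u • (1 : ι → K)) + h • ∑ k ∈ T, β k • RHS (ρ k) (V k) (τ k))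
    (hR_ne : ∀ i, R i ≠ 0) :
    W = u • (1 : ι → K) := by
  refine eq_smul_one_of_mul_eq_smul hR_ne ?_
  have hrhs : h • ∑ k ∈ T, β k • RHS (ρ k) (V k) (τ k)
      = u • (h • ∑ k ∈ T, (β k / 2) • (g (τ k) * ρ k)) := by
    simp only [smul_sum, smul_smul]
    refine sum_congr rfl fun k hk => ?_
    rw [hV k hk, hRHS, smul_smul]
    ring_nf
  rw [hW, hrhs, hR, smul_add, mul_smul_one]

theorem stmt13_general (n s : ℕ)
    (a : Fin s → Fin s → ℝ) (b c : Fin s → ℝ)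
    (Δt tn : ℝ) (r : Fin n → ℝ) (uinf : ℝ)
    (g : ℝ → Fin n → ℝ)
    (RHS : (Fin n → ℝ) → (Fin n → ℝ) → ℝ → (Fin n → ℝ))
    (hRHS : ∀ (w : Fin n → ℝ) (t : ℝ),
      RHS w (uinf • (1 : Fin n → ℝ)) t = (uinf / 2) • (g t * w))
    (rbar Ubar : Fin s → Fin n → ℝ)
    (hrbar : ∀ k : Fin s, rbar k = r + Δt •
      ∑ ν ∈ Finset.univ.filter (fun ν => ν < k),
        (a k ν / 2) • (g (tn + c ν * Δt) * rbar ν))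
    (hUbar : ∀ k : Fin s, rbar k * Ubar k = r * (uinf • (1 : Fin n → ℝ)) + Δt •
      ∑ ν ∈ Finset.univ.filter (fun ν => ν < k),
        a k ν • RHS (rbar ν) (Ubar ν) (tn + c ν * Δt))
    (hrbar_ne : ∀ (k : Fin s) (i : Fin n), rbar k i ≠ 0)
    (rnew Unew : Fin n → ℝ)
    (hrnew : rnew = r + Δt • ∑ k : Fin s, (b k / 2) • (g (tn + c k * Δt) * rbar k))
    (hUnew : rnew * Unew = r * (uinf • (1 : Fin n → ℝ)) + Δt •
      ∑ k : Fin s, b k • RHS (rbar k) (Ubar k) (tn + c k * Δt))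
    (hrnew_ne : ∀ i : Fin n, rnew i ≠ 0) :
    (∀ k : Fin s, Ubar k = uinf • (1 : Fin n → ℝ)) ∧
    Unew = uinf • (1 : Fin n → ℝ) := by
  have hstages : ∀ k : Fin s, Ubar k = uinf • (1 : Fin n → ℝ) := by
    intro k
    induction k using WellFoundedLT.induction with
    | _ k ih =>
      exact free_stream_explicit_update RHS g hRHS _ (a k) (fun ν => tn + c ν * Δt) rbar Ubar
        (fun ν hν => ih ν (mem_filter.mp hν).2) Δt (hrbar k) (hUbar k) (hrbar_ne k)
  exact ⟨hstages, free_stream_explicit_update RHS g hRHS univ b (fun k => tn + c k * Δt) rbar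
    Ubar (fun k _ => hstages k) Δt hrnew hUnew hrnew_ne⟩

/-- Proposition 4.2 of the paper: free-stream preservation of one step of an
`s`-stage explicit Runge–Kutta method applied to the semi-coupled system (4.5)
for the Jacobian square root `r` and the transformed solution, given the
free-stream consistency identity `RHS(w, u∞𝟙, t) = (u∞/2) g(t) ⊙ w`. -/
theorem stmt13 (n s : ℕ) (hn : 0 < n) (hs : 0 < s)
    (a : Fin s → Fin s → ℝ) (b c : Fin s → ℝ)
    (Δt tn : ℝ) (r : Fin n → ℝ) (uinf : ℝ)
    (g : ℝ → Fin n → ℝ)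
    (RHS : (Fin n → ℝ) → (Fin n → ℝ) → ℝ → (Fin n → ℝ))
    (hRHS : ∀ (w : Fin n → ℝ) (t : ℝ),
      RHS w (uinf • (1 : Fin n → ℝ)) t = (uinf / 2) • (g t * w))
    (rbar Ubar : Fin s → Fin n → ℝ)
    (hrbar : ∀ k : Fin s, rbar k = r + Δt •
      ∑ ν ∈ Finset.univ.filter (fun ν => ν < k),
        (a k ν / 2) • (g (tn + c ν * Δt) * rbar ν))
    (hUbar : ∀ k : Fin s, rbar k * Ubar k = r * (uinf • (1 : Fin n → ℝ)) + Δt •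
      ∑ ν ∈ Finset.univ.filter (fun ν => ν < k),
        a k ν • RHS (rbar ν) (Ubar ν) (tn + c ν * Δt))
    (hrbar_ne : ∀ (k : Fin s) (i : Fin n), rbar k i ≠ 0)
    (rnew Unew : Fin n → ℝ)
    (hrnew : rnew = r + Δt • ∑ k : Fin s, (b k / 2) • (g (tn + c k * Δt) * rbar k))
    (hUnew : rnew * Unew = r * (uinf • (1 : Fin n → ℝ)) + Δt •
      ∑ k : Fin s, b k • RHS (rbar k) (Ubar k) (tn + c k * Δt))
    (hrnew_ne : ∀ i : Fin n, rnew i ≠ 0) :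
    (∀ k : Fin s, Ubar k = uinf • (1 : Fin n → ℝ)) ∧
    Unew = uinf • (1 : Fin n → ℝ) :=
  stmt13_general n s a b c Δt tn r uinf g RHS hRHS rbar Ubar hrbar hUbar hrbar_ne rnew Unew hrnew
    hUnew hrnew_ne
end

section
/- Let n be a positive integer and let D₁, D₂ be n × n real matrices satisfying the consistency conditions D₁𝟙 = 0 and D₂𝟙 = 0 (𝟙 the all-ones vector) and the commutativity condition D₁D₂ = D₂D₁. Let X₁, X₂ : Fin n → ℝ and define the discrete Jacobian vector 𝒥 = (D₁X₁) ⊙ (D₂X₂) − (D₂X₁) ⊙ (D₁X₂) (componentwise products), and assume 𝒥 i ≠ 0 for every i. Define the physical-space operators D_{x₁} = (1/2) diag(𝒥)⁻¹ [ D₁ diag(D₂X₂) + diag(D₂X₂) D₁ − D₂ diag(D₁X₂) − diag(D₁X₂) D₂ ] and D_{x₂} = (1/2) diag(𝒥)⁻¹ [ D₂ diag(D₁X₁) + diag(D₁X₁) D₂ − D₁ diag(D₂X₁) − diag(D₂X₁) D₁ ]. Then D_{x₁} 𝟙 = 0 and D_{x₂} 𝟙 = 0. -/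
/-!
Applied to `𝟙`, each bracket `A diag(B X) + diag(B X) A − B diag(A X) − diag(A X) B`
collapses: the terms with the diagonal factor on the left vanish because `A 𝟙 = B 𝟙 = 0`,
while `diag(v) 𝟙 = v` turns the other two into `A B X − B A X`, which is zero since `A` and
`B` commute.
-/

open Matrix

section SplitForm

variable {R m : Type*} [Ring R] [Fintype m] [DecidableEq m]

theorem Matrix.diagonal_mulVec_one_s14 (v : m → R) : diagonal v *ᵥ 1 = v := by
  ext i
  simp [mulVec_diagonal]

def splitFormBracket (A B : Matrix m m R) (X : m → R) : Matrix m m R :=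
  A * diagonal (B *ᵥ X) + diagonal (B *ᵥ X) * A - B * diagonal (A *ᵥ X) - diagonal (A *ᵥ X) * B

theorem splitFormBracket_mulVec_one {A B : Matrix m m R} (hA : A *ᵥ 1 = 0) (hB : B *ᵥ 1 = 0)
    (hAB : A * B = B * A) (X : m → R) : splitFormBracket A B X *ᵥ 1 = 0 := by
  have hdiag_mul (v : m → R) (C : Matrix m m R) (hC : C *ᵥ 1 = 0) : (diagonal v * C) *ᵥ 1 = 0 := by
    rw [← mulVec_mulVec, hC, mulVec_zero]
  have hmul_diag (C : Matrix m m R) (v : m → R) : (C * diagonal v) *ᵥ 1 = C *ᵥ v := by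
    rw [← mulVec_mulVec, diagonal_mulVec_one_s14]
  have hcomm : A *ᵥ (B *ᵥ X) = B *ᵥ (A *ᵥ X) := by
    rw [mulVec_mulVec, mulVec_mulVec, hAB]
  simp only [splitFormBracket, sub_mulVec, add_mulVec, hmul_diag, hdiag_mul _ _ hA,
    hdiag_mul _ _ hB, hcomm, add_zero, sub_self]

end SplitForm

theorem stmt14_general (n : ℕ)
    (D1 D2 : Matrix (Fin n) (Fin n) ℝ)
    (hD1 : D1 *ᵥ (1 : Fin n → ℝ) = 0) (hD2 : D2 *ᵥ (1 : Fin n → ℝ) = 0)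
    (hcomm : D1 * D2 = D2 * D1)
    (X1 X2 : Fin n → ℝ)
    (J : Fin n → ℝ)
    (Dx1 Dx2 : Matrix (Fin n) (Fin n) ℝ)
    (hDx1 : Dx1 = (1 / 2 : ℝ) • ((Matrix.diagonal J)⁻¹ *
      (D1 * Matrix.diagonal (D2 *ᵥ X2) + Matrix.diagonal (D2 *ᵥ X2) * D1
        - D2 * Matrix.diagonal (D1 *ᵥ X2) - Matrix.diagonal (D1 *ᵥ X2) * D2)))
    (hDx2 : Dx2 = (1 / 2 : ℝ) • ((Matrix.diagonal J)⁻¹ *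
      (D2 * Matrix.diagonal (D1 *ᵥ X1) + Matrix.diagonal (D1 *ᵥ X1) * D2
        - D1 * Matrix.diagonal (D2 *ᵥ X1) - Matrix.diagonal (D2 *ᵥ X1) * D1))) :
    Dx1 *ᵥ (1 : Fin n → ℝ) = 0 ∧ Dx2 *ᵥ (1 : Fin n → ℝ) = 0 := by
  have h1 := splitFormBracket_mulVec_one hD1 hD2 hcomm X2
  have h2 := splitFormBracket_mulVec_one hD2 hD1 hcomm.symm X1
  unfold splitFormBracket at h1 h2
  subst hDx1 hDx2
  simp only [smul_mulVec, ← mulVec_mulVec, h1, h2, mulVec_zero, smul_zero, and_self]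

/-- Appendix B.1 of the paper: if the reference-domain derivative operators `D₁, D₂`
are consistent (`Dᵢ𝟙 = 0`) and commute, then the physical-space SBP derivative
operators built with the discretely computed metric terms and Jacobian
`𝒥 = (D₁X₁)⊙(D₂X₂) − (D₂X₁)⊙(D₁X₂)` annihilate constant vectors. -/
theorem stmt14 (n : ℕ) (hn : 0 < n)
    (D1 D2 : Matrix (Fin n) (Fin n) ℝ)
    (hD1 : D1 *ᵥ (1 : Fin n → ℝ) = 0) (hD2 : D2 *ᵥ (1 : Fin n → ℝ) = 0)
    (hcomm : D1 * D2 = D2 * D1)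
    (X1 X2 : Fin n → ℝ)
    (J : Fin n → ℝ)
    (hJ : J = (D1 *ᵥ X1) * (D2 *ᵥ X2) - (D2 *ᵥ X1) * (D1 *ᵥ X2))
    (hJne : ∀ i : Fin n, J i ≠ 0)
    (Dx1 Dx2 : Matrix (Fin n) (Fin n) ℝ)
    (hDx1 : Dx1 = (1 / 2 : ℝ) • ((Matrix.diagonal J)⁻¹ *
      (D1 * Matrix.diagonal (D2 *ᵥ X2) + Matrix.diagonal (D2 *ᵥ X2) * D1
        - D2 * Matrix.diagonal (D1 *ᵥ X2) - Matrix.diagonal (D1 *ᵥ X2) * D2)))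
    (hDx2 : Dx2 = (1 / 2 : ℝ) • ((Matrix.diagonal J)⁻¹ *
      (D2 * Matrix.diagonal (D1 *ᵥ X1) + Matrix.diagonal (D1 *ᵥ X1) * D2
        - D1 * Matrix.diagonal (D2 *ᵥ X1) - Matrix.diagonal (D2 *ᵥ X1) * D1))) :
    Dx1 *ᵥ (1 : Fin n → ℝ) = 0 ∧ Dx2 *ᵥ (1 : Fin n → ℝ) = 0 :=
  stmt14_general n D1 D2 hD1 hD2 hcomm X1 X2 J Dx1 Dx2 hDx1 hDx2
end

section
/- Let n ≥ 2, let 𝒫 : Fin n → ℝ be strictly positive quadrature weights, and let Q be an n × n real matrix satisfying the one-dimensional SBP property Q + Qᵀ = −e_sᵀ e_s + e_eᵀ e_e, where e_s and e_e are the row vectors selecting the first and last components. Set D_x = diag(𝒫)⁻¹ Q. Let ε > 0 and ẋ_s, ẋ_e ∈ ℝ. For any Φ ∈ ℝ^n, write Φ_s, Φ_e for its first and last components and Φ_{xs}, Φ_{xe} for the first and last components of D_xΦ, and define the discrete energy contribution 𝓔(Φ) = Φᵀ diag(𝒫)( ε D_x² − D_x )Φ + Φ_s( ε Φ_{xs}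 − (1 − ẋ_s) Φ_s ) + ( −ε Φ_{xe} + (1/2)(1 − ẋ_e) Φ_e ) Φ_e + (1/2)( ẋ_e Φ_e² − ẋ_s Φ_s² ). Then 𝓔(Φ) = −ε (D_xΦ)ᵀ diag(𝒫) (D_xΦ) − (1/2)(1 − ẋ_s) Φ_s² ; in particular, if ẋ_s ≤ 1 then 𝓔(Φ) ≤ 0 for every Φ ∈ ℝ^n. -/
/-!
Since `diag(𝒫) D_x = Q`, the SBP property `Q + Qᵀ = e_eᵀe_e − e_sᵀe_s` moves one
derivative of `Φᵀ diag(𝒫) (εD_x² − D_x) Φ` onto `Φ`: the volume term becomes the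
boundary form `ε (Φ_e Φ_{xe} − Φ_s Φ_{xs}) − ½ (Φ_e² − Φ_s²)` minus `ε ‖D_xΦ‖²_𝒫`.
The SAT and moving-boundary terms cancel this boundary form up to `−½ (1 − ẋ_s) Φ_s²`.
-/

open Matrix

section SBP

variable {ι R : Type*} [Fintype ι]

theorem dotProduct_single_mulVec [DecidableEq ι] [CommSemiring R] (i j : ι) (c : R)
    (u v : ι → R) :
    u ⬝ᵥ (single i j c *ᵥ v) = c * u i * v j := by
  rw [single_mulVec_eq, dotProduct_smul, dotProduct_single, smul_eq_mul]; ring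

theorem dotProduct_mulVec_add_dotProduct_mulVec [CommSemiring R] (Q : Matrix ι ι R)
    (u v : ι → R) :
    u ⬝ᵥ (Q *ᵥ v) + v ⬝ᵥ (Q *ᵥ u) = u ⬝ᵥ ((Q + Qᵀ) *ᵥ v) := by
  rw [add_mulVec, dotProduct_add, mulVec_transpose, dotProduct_comm u (v ᵥ* Q),
    ← dotProduct_mulVec]

theorem dotProduct_diagonal_mulVec_self_nonneg [DecidableEq ι] [CommRing R] [LinearOrder R]
    [IsStrictOrderedRing R] {d : ι → R} (hd : ∀ i, 0 ≤ d i) (w : ι → R) :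
    0 ≤ w ⬝ᵥ (diagonal d *ᵥ w) := by
  simp only [mulVec_diagonal, dotProduct]
  exact Finset.sum_nonneg fun i _ => by
    rw [mul_left_comm]; exact mul_nonneg (hd i) (mul_self_nonneg (w i))

theorem dotProduct_mulVec_advectionDiffusion_eq [CommRing R] {S D Q : Matrix ι ι R}
    (hSD : S * D = Q) (ε : R) (Φ : ι → R) :
    Φ ⬝ᵥ (S *ᵥ ((ε • (D * D) - D) *ᵥ Φ)) =
      ε * (Φ ⬝ᵥ ((Q + Qᵀ) *ᵥ (D *ᵥ Φ)) - (D *ᵥ Φ) ⬝ᵥ (S *ᵥ (D *ᵥ Φ))) - Φ ⬝ᵥ (Q *ᵥ Φ) := by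
  rw [← dotProduct_mulVec_add_dotProduct_mulVec, ← hSD]
  simp only [mulVec_mulVec, sub_mulVec, smul_mulVec, mulVec_sub, mulVec_smul, dotProduct_sub,
    dotProduct_smul, smul_eq_mul, mul_assoc]
  ring

end SBP

/-- The discrete energy computation of Section 5 of the paper: for the 1-D SBP–SAT
discretization of advection–diffusion on a moving interval, the discrete energy
contribution `𝓔(Φ)` equals `−ε‖D_xΦ‖²_𝒫 − (1/2)(1 − ẋ_s)Φ_s²`; in particular, if
`ẋ_s ≤ 1` then `𝓔(Φ) ≤ 0` for every `Φ`. -/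
theorem stmt15 (n : ℕ) (hn : 2 ≤ n)
    (Pvol : Fin n → ℝ) (hPvol : ∀ i, 0 < Pvol i)
    (Q : Matrix (Fin n) (Fin n) ℝ)
    (hQ : Q + Qᵀ =
      Matrix.single (⟨n - 1, by omega⟩ : Fin n) (⟨n - 1, by omega⟩ : Fin n) 1
      - Matrix.single (⟨0, by omega⟩ : Fin n) (⟨0, by omega⟩ : Fin n) 1)
    (Dx : Matrix (Fin n) (Fin n) ℝ) (hDx : Dx = (Matrix.diagonal Pvol)⁻¹ * Q)
    (ε : ℝ) (hε : 0 < ε) (xds xde : ℝ)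
    (En : (Fin n → ℝ) → ℝ)
    (hEn : ∀ Φ : Fin n → ℝ, En Φ =
      Φ ⬝ᵥ (Matrix.diagonal Pvol *ᵥ ((ε • (Dx * Dx) - Dx) *ᵥ Φ))
      + Φ ⟨0, by omega⟩ *
          (ε * (Dx *ᵥ Φ) ⟨0, by omega⟩ - (1 - xds) * Φ ⟨0, by omega⟩)
      + (-(ε * (Dx *ᵥ Φ) ⟨n - 1, by omega⟩)
          + (1 / 2) * (1 - xde) * Φ ⟨n - 1, by omega⟩) * Φ ⟨n - 1, by omega⟩
      + (1 / 2) * (xde * Φ ⟨n - 1, by omega⟩ ^ 2 - xds * Φ ⟨0, by omega⟩ ^ 2)) :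
    ∀ Φ : Fin n → ℝ,
      En Φ = -(ε * ((Dx *ᵥ Φ) ⬝ᵥ (Matrix.diagonal Pvol *ᵥ (Dx *ᵥ Φ))))
          - (1 / 2) * (1 - xds) * Φ ⟨0, by omega⟩ ^ 2
      ∧ (xds ≤ 1 → En Φ ≤ 0) := by
  intro Φ
  set s : Fin n := ⟨0, by omega⟩
  set e : Fin n := ⟨n - 1, by omega⟩
  have hP : IsUnit (diagonal Pvol).det := (isUnit_iff_isUnit_det _).1 <|
    isUnit_diagonal.2 <| Pi.isUnit_iff.2 fun i => (hPvol i).ne'.isUnit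
  have hSD : diagonal Pvol * Dx = Q := by rw [hDx, mul_nonsing_inv_cancel_left _ _ hP]
  have hB : ∀ u v, u ⬝ᵥ ((Q + Qᵀ) *ᵥ v) = u e * v e - u s * v s := by
    intro u v
    rw [hQ, sub_mulVec, dotProduct_sub, dotProduct_single_mulVec, dotProduct_single_mulVec]
    ring
  have hQΦ : Φ ⬝ᵥ (Q *ᵥ Φ) = (Φ e ^ 2 - Φ s ^ 2) / 2 := by
    linarith [dotProduct_mulVec_add_dotProduct_mulVec Q Φ Φ, hB Φ Φ]
  have hEnΦ : En Φ = -(ε * ((Dx *ᵥ Φ) ⬝ᵥ (diagonal Pvol *ᵥ (Dx *ᵥ Φ))))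
      - (1 / 2) * (1 - xds) * Φ s ^ 2 := by
    rw [hEn, dotProduct_mulVec_advectionDiffusion_eq hSD, hB, hQΦ]
    ring
  refine ⟨hEnΦ, fun hxds => ?_⟩
  have hw := dotProduct_diagonal_mulVec_self_nonneg (fun i => (hPvol i).le) (Dx *ᵥ Φ)
  rw [hEnΦ]
  nlinarith [mul_nonneg hε.le hw, mul_nonneg (sub_nonneg.2 hxds) (sq_nonneg (Φ s))]
end
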